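/- arXiv:0908.3163 — 3 statements merged into one kernel-verified Lean document; each statement's English description precedes it below -/
import Mathlib

section
/- Let α ≥ 1 be an integer and let f : [0,1] → ℝ be α-times continuously differentiable with f^{(l)}(0) = f^{(l)}(1) = 0 for every odd integer l < α. Let θ_k := ∫₀¹ f(x)·cos(kπx) dx for k ≥ 1. Then ∫₀¹ (f^{(α)}(x))² dx = 2·π^{2α} · Σ_{k=1}^∞ k^{2α}·θ_k². Consequently, for any C > 0, ∫₀¹ (f^{(α)}(x))² dx ≤ 2π^{2α}·C holds if and only if Σ_{k=1}^∞ k^{2α}·θ_k² ≤ C. -/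
/-!
Extend `g` evenly (resp. oddly) to `[-1, 1]`. Parseval's identity on `[-1, 1]` then says that
`∫₀¹ g² = ∑_{n ∈ ℤ} a_n²`, where `a_n` are the cosine (resp. sine) coefficients of `g` on `[0, 1]`.
Integrating by parts `α` times, the `k`-th cosine coefficient (`α` even) or sine coefficient
(`α` odd) of `f^(α)` is `± (kπ)^α` times the `k`-th cosine coefficient of `f`. The boundary terms
vanish because `sin (kπx)` vanishes at `0` and `1`, and because the odd derivatives of `f` vanish
there. For even `α ≥ 2` the same computation at `k = 0` shows that the zeroth cosine coefficient
of `f^(α)` vanishes, so only the frequencies `k ≥ 1` remain.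
-/

open MeasureTheory Real Set intervalIntegral
open scoped Interval

theorem intervalIntegral.integral_neg_self_eq_integral_add_comp_neg {E : Type*}
    [NormedAddCommGroup E] [NormedSpace ℝ E] {h : ℝ → E} {a : ℝ}
    (hh : IntervalIntegrable h volume (-a) a) :
    ∫ x in -a..a, h x = ∫ x in 0..a, (h x + h (-x)) := by
  have h0 : (0:ℝ) ∈ [[-a, a]] := by
    rw [mem_uIcc]
    rcases le_total 0 a with ha | ha
    exacts [.inl ⟨by linarith, ha⟩, .inr ⟨ha, by linarith⟩]
  have hright : IntervalIntegrable h volume 0 a :=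
    hh.mono_set (uIcc_subset_uIcc h0 right_mem_uIcc)
  have hleft : IntervalIntegrable h volume (-a) 0 :=
    hh.mono_set (uIcc_subset_uIcc left_mem_uIcc h0)
  rw [integral_add hright (by simpa using (hleft.comp_mul_left (c := -1)).symm), integral_comp_neg,
    neg_zero, add_comm, integral_add_adjacent_intervals hleft hright]

noncomputable section

def cosCoeff (g : ℝ → ℝ) (k : ℝ) : ℝ := ∫ x in (0:ℝ)..1, g x * cos (k * π * x)

def sinCoeff (g : ℝ → ℝ) (k : ℝ) : ℝ := ∫ x in (0:ℝ)..1, g x * sin (k * π * x)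

/-- The even (`ε = 1`) or odd (`ε = -1`) extension of `g`, up to its value at `0`. -/
def symmExt (ε : ℂ) (g : ℝ → ℝ) (x : ℝ) : ℂ := if 0 < x then g x else ε * g (-x)

end

section SymmExt

variable {g : ℝ → ℝ} (ε : ℂ)

theorem symmExt_of_pos {x : ℝ} (hx : 0 < x) : symmExt ε g x = g x := if_pos hx

theorem symmExt_neg_of_pos {x : ℝ} (hx : 0 < x) : symmExt ε g (-x) = ε * g x := by
  simp [symmExt, hx.le]

theorem memLp_symmExt (hg : Continuous g) :
    MemLp (symmExt ε g) 2 (volume.restrict (Ioc (-1) 1)) := by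
  obtain ⟨M, hM⟩ := (isCompact_Icc (a := (0:ℝ)) (b := 1)).exists_bound_of_continuousOn
    hg.continuousOn
  have hmeas : Measurable (symmExt ε g) :=
    Measurable.ite measurableSet_Ioi (Complex.measurable_ofReal.comp hg.measurable)
      (measurable_const.mul (Complex.measurable_ofReal.comp (hg.measurable.comp measurable_neg)))
  refine MemLp.of_bound hmeas.aestronglyMeasurable (max 1 ‖ε‖ * M)
    (ae_restrict_of_forall_mem measurableSet_Ioc fun x hx => ?_)
  have hM0 : 0 ≤ M := (norm_nonneg _).trans (hM 0 (by simp))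
  unfold symmExt
  split_ifs with h
  · simpa using (hM x ⟨h.le, hx.2⟩).trans (le_mul_of_one_le_left hM0 (le_max_left _ _))
  · rw [norm_mul, Complex.norm_real]
    exact mul_le_mul (le_max_right _ _) (hM (-x) ⟨by linarith, by linarith [hx.1]⟩)
      (norm_nonneg _) ((norm_nonneg _).trans (le_max_right _ _))

theorem integral_norm_sq_symmExt (hg : Continuous g) (hε : ‖ε‖ = 1) :
    ∫ x in (-1:ℝ)..1, ‖symmExt ε g x‖ ^ 2 = 2 * ∫ x in (0:ℝ)..1, g x ^ 2 := by
  have hint : IntervalIntegrable (fun x => ‖symmExt ε g x‖ ^ 2) volume (-1) 1 :=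
    (intervalIntegrable_iff_integrableOn_Ioc_of_le (by norm_num)).2
      ((memLp_symmExt ε hg).integrable_norm_pow two_ne_zero)
  rw [integral_neg_self_eq_integral_add_comp_neg hint, ← intervalIntegral.integral_const_mul]
  refine integral_congr_ae (ae_of_all _ fun x hx => ?_)
  rw [uIoc_of_le zero_le_one] at hx
  simp only [symmExt_of_pos ε hx.1, symmExt_neg_of_pos ε hx.1, norm_mul, hε, one_mul,
    Complex.norm_real, Real.norm_eq_abs, sq_abs]
  ring

theorem fourierCoeffOn_symmExt (hg : Continuous g) (n : ℤ) :
    fourierCoeffOn (by norm_num : (-1:ℝ) < 1) (symmExt ε g) n =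
      (1 + ε) / 2 * cosCoeff g n - Complex.I * ((1 - ε) / 2) * sinCoeff g n := by
  have hfourier : ∀ x : ℝ, fourier (-n) (x : AddCircle ((1:ℝ) - -1)) =
      cos (n * π * x) - sin (n * π * x) * Complex.I := by
    intro x
    have harg : 2 * π * Complex.I * ((-n : ℤ) : ℂ) * x / ((1:ℝ) - -1 : ℝ) =
        ((-(n * π * x) : ℝ) : ℂ) * Complex.I := by
      push_cast; ring
    rw [fourier_coe_apply, harg, Complex.exp_mul_I, ← Complex.ofReal_cos, ← Complex.ofReal_sin,
      cos_neg, sin_neg, Complex.ofReal_neg, neg_mul, sub_eq_add_neg]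
  have hint : IntervalIntegrable
      (fun x : ℝ => fourier (-n) (x : AddCircle ((1:ℝ) - -1)) • symmExt ε g x)
      volume (-1) 1 := by
    refine (intervalIntegrable_iff_integrableOn_Ioc_of_le (by norm_num)).2 ?_
    simp_rw [smul_eq_mul]
    exact ((memLp_symmExt ε hg).integrable one_le_two).bdd_mul (c := 1)
      ((fourier (-n)).continuous.comp (AddCircle.continuous_mk' _)).aestronglyMeasurable
      (ae_of_all _ fun x => by rw [fourier_apply, Circle.norm_coe])
  have hpt : ∀ x ∈ Ι (0:ℝ) 1,
      fourier (-n) (x : AddCircle ((1:ℝ) - -1)) • symmExt ε g x +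
        fourier (-n) ((-x : ℝ) : AddCircle ((1:ℝ) - -1)) • symmExt ε g (-x) =
      (1 + ε) * ((g x * cos (n * π * x) : ℝ) : ℂ) -
        Complex.I * (1 - ε) * ((g x * sin (n * π * x) : ℝ) : ℂ) := by
    intro x hx
    rw [uIoc_of_le zero_le_one] at hx
    rw [symmExt_of_pos ε hx.1, symmExt_neg_of_pos ε hx.1, hfourier, hfourier, smul_eq_mul,
      smul_eq_mul, mul_neg, cos_neg, sin_neg]
    push_cast
    ring
  have hcont : ∀ F : ℝ → ℝ, Continuous F →
      IntervalIntegrable (fun x => ((g x * F (n * π * x) : ℝ) : ℂ)) volume 0 1 := fun F hF =>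
    (Complex.continuous_ofReal.comp (hg.mul (hF.comp (by fun_prop)))).intervalIntegrable _ _
  rw [fourierCoeffOn_eq_integral, integral_neg_self_eq_integral_add_comp_neg hint,
    integral_congr_ae (ae_of_all _ hpt), integral_sub ((hcont _ continuous_cos).const_mul _)
      ((hcont _ continuous_sin).const_mul _), intervalIntegral.integral_const_mul,
    intervalIntegral.integral_const_mul,
    integral_ofReal, integral_ofReal, cosCoeff, sinCoeff, Complex.real_smul]
  norm_num
  ring

end SymmExt

theorem HasSum.nat_succ_of_even {M : Type*} [AddCommGroup M] [TopologicalSpace M]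
    [IsTopologicalAddGroup M] {f : ℤ → M} {S : M} (hf : HasSum f S)
    (heven : ∀ n, f (-n) = f n) :
    HasSum (fun n : ℕ => 2 • f (n + 1)) (S - f 0) := by
  have h := hf.nat_add_neg
  simp only [heven, ← two_nsmul] at h
  rw [← hasSum_nat_add_iff' 1] at h
  convert h using 1
  · simp
  · simp only [Finset.range_one, Finset.sum_singleton, Nat.cast_zero]
    abel

section Parseval

variable {g : ℝ → ℝ}

theorem hasSum_sq_cosCoeff_int (hg : Continuous g) :
    HasSum (fun n : ℤ => cosCoeff g n ^ 2) (∫ x in (0:ℝ)..1, g x ^ 2) := by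
  have h := hasSum_sq_fourierCoeffOn (by norm_num : (-1:ℝ) < 1) (memLp_symmExt 1 hg)
  simp only [fourierCoeffOn_symmExt 1 hg, integral_norm_sq_symmExt 1 hg norm_one] at h
  norm_num at h
  rwa [one_div, inv_mul_cancel_left₀ two_ne_zero] at h

theorem hasSum_sq_sinCoeff_int (hg : Continuous g) :
    HasSum (fun n : ℤ => sinCoeff g n ^ 2) (∫ x in (0:ℝ)..1, g x ^ 2) := by
  have h := hasSum_sq_fourierCoeffOn (by norm_num : (-1:ℝ) < 1) (memLp_symmExt (-1) hg)
  simp only [fourierCoeffOn_symmExt (-1) hg, integral_norm_sq_symmExt (-1) hg (by simp)] at h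
  norm_num at h
  rwa [one_div, inv_mul_cancel_left₀ two_ne_zero] at h

theorem cosCoeff_neg (k : ℝ) : cosCoeff g (-k) = cosCoeff g k := by
  simp only [cosCoeff, neg_mul, cos_neg]

theorem sinCoeff_neg (k : ℝ) : sinCoeff g (-k) = -sinCoeff g k := by
  simp only [sinCoeff, neg_mul, sin_neg, mul_neg, intervalIntegral.integral_neg]

theorem hasSum_two_mul_sq_cosCoeff (hg : Continuous g) :
    HasSum (fun n : ℕ => 2 * cosCoeff g (n + 1) ^ 2)
      ((∫ x in (0:ℝ)..1, g x ^ 2) - cosCoeff g 0 ^ 2) := by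
  simpa using (hasSum_sq_cosCoeff_int hg).nat_succ_of_even fun n => by
    rw [Int.cast_neg, cosCoeff_neg]

theorem hasSum_two_mul_sq_sinCoeff (hg : Continuous g) :
    HasSum (fun n : ℕ => 2 * sinCoeff g (n + 1) ^ 2) (∫ x in (0:ℝ)..1, g x ^ 2) := by
  simpa [sinCoeff] using (hasSum_sq_sinCoeff_int hg).nat_succ_of_even fun n => by
    rw [Int.cast_neg, sinCoeff_neg, neg_sq]

end Parseval

section IntegrationByParts

variable {u u' : ℝ → ℝ} (hu : ∀ x ∈ [[(0:ℝ), 1]], HasDerivAt u (u' x) x)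
  (hu' : IntervalIntegrable u' volume 0 1)
include hu hu'

theorem sinCoeff_deriv (k : ℕ) : sinCoeff u' k = -(k * π) * cosCoeff u k := by
  have hv : ∀ x ∈ [[(0:ℝ), 1]],
      HasDerivAt (fun x => sin (k * π * x)) (cos (k * π * x) * (k * π)) x :=
    fun x _ => by simpa using ((hasDerivAt_id x).const_mul (k * π)).sin
  have h := intervalIntegral.integral_mul_deriv_eq_deriv_mul hu hv hu'
    ((by fun_prop : Continuous _).intervalIntegrable _ _)
  rw [mul_one, mul_zero, sin_zero, sin_nat_mul_pi] at h
  simp only [cosCoeff, sinCoeff, ← mul_assoc, intervalIntegral.integral_mul_const] at h ⊢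
  linarith

theorem cosCoeff_deriv (h0 : u 0 = 0) (h1 : u 1 = 0) (k : ℝ) :
    cosCoeff u' k = k * π * sinCoeff u k := by
  have hv : ∀ x ∈ [[(0:ℝ), 1]],
      HasDerivAt (fun x => -cos (k * π * x)) (sin (k * π * x) * (k * π)) x :=
    fun x _ => by simpa using (((hasDerivAt_id x).const_mul (k * π)).cos).fun_neg
  have h := intervalIntegral.integral_mul_deriv_eq_deriv_mul hu hv hu'
    ((by fun_prop : Continuous _).intervalIntegrable _ _)
  rw [h0, h1] at h
  simp only [cosCoeff, sinCoeff, ← mul_assoc, intervalIntegral.integral_mul_const, mul_neg,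
    intervalIntegral.integral_neg] at h ⊢
  linarith

end IntegrationByParts

section IteratedDeriv

variable {f : ℝ → ℝ} {α l : ℕ} (hf : ContDiff ℝ (α : ℕ∞) f)
include hf

theorem ContDiff.hasDerivAt_iteratedDeriv (hl : l < α) (x : ℝ) :
    HasDerivAt (iteratedDeriv l f) (iteratedDeriv (l + 1) f x) x := by
  rw [iteratedDeriv_succ]
  exact ((hf.differentiable_iteratedDeriv l (mod_cast hl)) x).hasDerivAt

theorem sinCoeff_iteratedDeriv_succ (hl : l < α) (k : ℕ) :
    sinCoeff (iteratedDeriv (l + 1) f) k = -(k * π) * cosCoeff (iteratedDeriv l f) k :=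
  sinCoeff_deriv (fun x _ => hf.hasDerivAt_iteratedDeriv hl x)
    ((hf.continuous_iteratedDeriv (l + 1) (mod_cast hl)).intervalIntegrable _ _) k

theorem cosCoeff_iteratedDeriv_succ (hl : l < α) (h0 : iteratedDeriv l f 0 = 0)
    (h1 : iteratedDeriv l f 1 = 0) (k : ℝ) :
    cosCoeff (iteratedDeriv (l + 1) f) k = k * π * sinCoeff (iteratedDeriv l f) k :=
  cosCoeff_deriv (fun x _ => hf.hasDerivAt_iteratedDeriv hl x)
    ((hf.continuous_iteratedDeriv (l + 1) (mod_cast hl)).intervalIntegrable _ _) h0 h1 k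

variable
  (hbdry : ∀ l : ℕ, Odd l → l < α → iteratedDeriv l f 0 = 0 ∧ iteratedDeriv l f 1 = 0)
include hbdry

theorem cosCoeff_iteratedDeriv_two_mul (k : ℕ) {m : ℕ} (hm : 2 * m ≤ α) :
    cosCoeff (iteratedDeriv (2 * m) f) k = (-(k * π) ^ 2) ^ m * cosCoeff f k := by
  induction m with
  | zero => simp
  | succ m ih =>
    have hodd : Odd (2 * m + 1) := odd_two_mul_add_one m
    obtain ⟨h0, h1⟩ := hbdry (2 * m + 1) hodd (by omega)
    rw [mul_add_one, cosCoeff_iteratedDeriv_succ hf (by omega) h0 h1,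
      sinCoeff_iteratedDeriv_succ hf (by omega), ih (by omega)]
    ring

theorem sinCoeff_iteratedDeriv_two_mul_add_one (k : ℕ) {m : ℕ} (hm : 2 * m + 1 ≤ α) :
    sinCoeff (iteratedDeriv (2 * m + 1) f) k = -(k * π) * (-(k * π) ^ 2) ^ m * cosCoeff f k := by
  rw [sinCoeff_iteratedDeriv_succ hf (by omega),
    cosCoeff_iteratedDeriv_two_mul hf hbdry k (by omega), mul_assoc]

theorem hasSum_integral_sq_iteratedDeriv (hα : 1 ≤ α) :
    HasSum (fun k : ℕ => 2 * (((k : ℝ) + 1) * π) ^ (2 * α) * cosCoeff f ((k : ℝ) + 1) ^ 2)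
      (∫ x in (0:ℝ)..1, iteratedDeriv α f x ^ 2) := by
  have hpow (x : ℝ) (m : ℕ) : ((-x ^ 2) ^ m) ^ 2 = x ^ (4 * m) := by
    rw [← pow_mul, Even.neg_pow ⟨m, by ring⟩, ← pow_mul]
    ring_nf
  obtain ⟨m, rfl | rfl⟩ := Nat.even_or_odd' α
  · have hzero : cosCoeff (iteratedDeriv (2 * m) f) 0 = 0 := by
      simpa [show m ≠ 0 by omega] using cosCoeff_iteratedDeriv_two_mul hf hbdry 0 le_rfl
    have h := hasSum_two_mul_sq_cosCoeff (hf.continuous_iteratedDeriv (2 * m) le_rfl)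
    rw [hzero, sq, mul_zero, sub_zero] at h
    refine h.congr_fun fun k => ?_
    have hk := cosCoeff_iteratedDeriv_two_mul hf hbdry (k + 1) le_rfl
    push_cast at hk
    rw [hk]
    linear_combination (-2 * cosCoeff f (k + 1) ^ 2) * hpow (((k : ℝ) + 1) * π) m
  · have h := hasSum_two_mul_sq_sinCoeff (hf.continuous_iteratedDeriv (2 * m + 1) le_rfl)
    refine h.congr_fun fun k => ?_
    have hk := sinCoeff_iteratedDeriv_two_mul_add_one hf hbdry (k + 1) le_rfl
    push_cast at hk
    rw [hk]
    linear_combination (-2 * (((k : ℝ) + 1) * π) ^ 2 * cosCoeff f (k + 1) ^ 2) *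
      hpow (((k : ℝ) + 1) * π) m

end IteratedDeriv

/-- Parseval-type identity for the cosine series coefficients of a smooth
function with vanishing odd derivatives at the boundary, and the resulting
characterization of the Sobolev s-ellipsoid. -/
theorem parseval_sobolev_s_ellipsoid (α : ℕ) (hα : 1 ≤ α) (f : ℝ → ℝ)
    (hf : ContDiff ℝ (α : ℕ∞) f)
    (hbdry : ∀ l : ℕ, Odd l → l < α →
      iteratedDeriv l f 0 = 0 ∧ iteratedDeriv l f 1 = 0)
    (θ : ℕ → ℝ)
    (hθ : ∀ k : ℕ, 1 ≤ k →
      θ k = ∫ x in (0:ℝ)..1, f x * Real.cos (k * Real.pi * x)) :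
    (∫ x in (0:ℝ)..1, (iteratedDeriv α f x) ^ 2)
        = 2 * Real.pi ^ (2 * α) *
          ∑' k : ℕ, ((k : ℝ) + 1) ^ (2 * α) * (θ (k + 1)) ^ 2
      ∧ ∀ C : ℝ, 0 < C →
        ((∫ x in (0:ℝ)..1, (iteratedDeriv α f x) ^ 2) ≤ 2 * Real.pi ^ (2 * α) * C
          ↔ ∑' k : ℕ, ((k : ℝ) + 1) ^ (2 * α) * (θ (k + 1)) ^ 2 ≤ C) := by
  have hθ' (k : ℕ) : θ (k + 1) = cosCoeff f ((k : ℝ) + 1) := by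
    rw [hθ (k + 1) k.succ_pos, cosCoeff]
    push_cast
    rfl
  have hmain : ∫ x in (0:ℝ)..1, iteratedDeriv α f x ^ 2 =
      2 * π ^ (2 * α) * ∑' k : ℕ, ((k : ℝ) + 1) ^ (2 * α) * θ (k + 1) ^ 2 := by
    rw [← (hasSum_integral_sq_iteratedDeriv hf hbdry hα).tsum_eq, ← tsum_mul_left]
    refine tsum_congr fun k => ?_
    rw [hθ', mul_pow]
    ring
  refine ⟨hmain, fun C _ => ?_⟩
  rw [hmain]
  exact mul_le_mul_iff_right₀ (by positivity)
end

section
/- For every integer n ≥ 4, the largest eigenvalue of J_n^τ satisfies λ₁(J_n^τ) ≤ 4·n^{−1}·log²n; explicitly, (n − n/log n)^{−1} · (4·sin²(⌊n/log n⌋·π/(2n)))^{−1} ≤ 4·log²n / n, where log denotes the binary logarithm. -/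
private lemma sq_le_two_pow : ∀ n : ℕ, 4 ≤ n → n ^ 2 ≤ 2 ^ n := by
  intro n hn
  induction n with
  | zero => omega
  | succ k ih =>
    rcases Nat.lt_or_ge k 4 with hk | hk
    · have : k = 3 := by omega
      subst this; norm_num
    · have h := ih (by omega)
      have : (k + 1) ^ 2 ≤ 2 * k ^ 2 := by nlinarith
      calc (k + 1) ^ 2 ≤ 2 * k ^ 2 := this
        _ ≤ 2 * 2 ^ k := by omega
        _ = 2 ^ (k + 1) := by ring

private lemma logb_le_half (n : ℕ) (hn : 4 ≤ n) : Real.logb 2 n ≤ (n : ℝ) / 2 := by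
  have hn0 : (0 : ℝ) < n := by positivity
  rw [Real.logb_le_iff_le_rpow (by norm_num) hn0]
  have h2 : (0 : ℝ) ≤ (2 : ℝ) ^ ((n : ℝ) / 2) := by positivity
  have hsq : ((n : ℝ)) ^ 2 ≤ ((2 : ℝ) ^ ((n : ℝ) / 2)) ^ 2 := by
    have : ((2 : ℝ) ^ ((n : ℝ) / 2)) ^ 2 = (2 : ℝ) ^ (n : ℝ) := by
      rw [← Real.rpow_natCast ((2:ℝ) ^ ((n:ℝ)/2)) 2, ← Real.rpow_mul (by norm_num)]
      norm_num
    rw [this]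
    have := sq_le_two_pow n hn
    have h := (Nat.cast_le (α := ℝ)).2 this
    push_cast at h
    rw [Real.rpow_natCast]
    exact_mod_cast h
  nlinarith

private lemma key (n : ℕ) (hn : 4 ≤ n) (i : ℕ)
    (h1 : ⌊(n : ℝ) / Real.logb 2 n⌋₊ ≤ i) (h2 : i ≤ n - 1) :
    ((n : ℝ) - n / Real.logb 2 n)⁻¹
        * (4 * Real.sin ((i : ℝ) * Real.pi / (2 * n)) ^ 2)⁻¹
      ≤ 4 * (Real.logb 2 n) ^ 2 / n := by
  set L := Real.logb 2 n with hLdef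
  have hn0 : (0 : ℝ) < n := by positivity
  have hL2 : (2 : ℝ) ≤ L := by
    have : Real.logb 2 4 ≤ L := by
      apply Real.logb_le_logb_of_le (by norm_num : (1:ℝ) < 2) (by norm_num)
      exact_mod_cast hn
    have h4 : Real.logb 2 4 = 2 := by
      rw [show (4 : ℝ) = 2 ^ (2 : ℕ) by norm_num, Real.logb_pow,
        Real.logb_self_eq_one (by norm_num : (1:ℝ) < 2)]
      norm_num
    linarith
  have hL0 : (0 : ℝ) < L := by linarith
  have hLn : L ≤ (n : ℝ) / 2 := logb_le_half n hn
  have hpi : (0 : ℝ) < Real.pi := Real.pi_pos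
  have hin : (i : ℝ) ≤ n := by
    have : i ≤ n := le_trans h2 (Nat.sub_le n 1)
    exact_mod_cast this
  -- lower bound on sin
  set x := (i : ℝ) * Real.pi / (2 * n) with hxdef
  have hx0 : 0 ≤ x := by positivity
  have hxpi : x ≤ Real.pi / 2 := by
    rw [hxdef, div_le_div_iff₀ (by positivity) (by norm_num)]
    nlinarith
  have hsin : (i : ℝ) / n ≤ Real.sin x := by
    have := Real.mul_le_sin hx0 hxpi
    have heq : 2 / Real.pi * x = (i : ℝ) / n := by
      rw [hxdef]; field_simp
    linarith [heq ▸ this]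
  -- floor lower bound
  have hfl : (n : ℝ) / L - 1 < (⌊(n : ℝ) / L⌋₊ : ℝ) := by
    have := Nat.lt_floor_add_one ((n : ℝ) / L)
    linarith
  have hiR : (n : ℝ) / L - 1 < (i : ℝ) := by
    have : ((⌊(n : ℝ) / L⌋₊ : ℕ) : ℝ) ≤ (i : ℝ) := by exact_mod_cast h1
    linarith
  have h2Ln : 2 * L ≤ (n : ℝ) := by linarith
  have hsinlb : 1 / (2 * L) ≤ Real.sin x := by
    have h1 : 1 / (2 * L) ≤ (i : ℝ) / n := by
      rw [div_le_div_iff₀ (by positivity) hn0]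
      have : (n : ℝ) / L ≥ 2 := by
        rw [ge_iff_le, le_div_iff₀ hL0]; linarith
      have hnl : ((n : ℝ) / L) * L = n := div_mul_cancel₀ _ (ne_of_gt hL0)
      nlinarith [mul_lt_mul_of_pos_right hiR hL0]
    linarith
  have hsinpos : 0 < Real.sin x := lt_of_lt_of_le (by positivity) hsinlb
  have hsq : (1 / (2 * L)) ^ 2 ≤ Real.sin x ^ 2 := by
    apply pow_le_pow_left₀ (by positivity) hsinlb
  -- denominator lower bound
  have hdenom : (n : ℝ) / 2 ≤ (n : ℝ) - n / L := by
    have : (n : ℝ) / L ≤ (n : ℝ) / 2 := by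
      apply div_le_div_of_nonneg_left (le_of_lt hn0) (by norm_num) hL2
    linarith
  have hdpos : (0 : ℝ) < (n : ℝ) - n / L := lt_of_lt_of_le (by positivity) hdenom
  have step : ((n : ℝ) - n / L)⁻¹ * (4 * Real.sin x ^ 2)⁻¹
      ≤ ((n : ℝ) / 2)⁻¹ * (4 * (1 / (2 * L)) ^ 2)⁻¹ := by
    apply mul_le_mul
    · exact inv_anti₀ (by positivity) hdenom
    · exact inv_anti₀ (by positivity) (by nlinarith)
    · positivity
    · positivity
  have hval : ((n : ℝ) / 2)⁻¹ * (4 * (1 / (2 * L)) ^ 2)⁻¹ = 2 * L ^ 2 / n := by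
    field_simp
    ring
  rw [hval] at step
  have hfin : 2 * L ^ 2 / n ≤ 4 * L ^ 2 / n := by
    rw [div_le_div_iff₀ hn0 hn0]
    nlinarith [sq_nonneg L]
  linarith

/-- Bound on the largest eigenvalue of `J_n^τ`: for `n ≥ 4`, every diagonal
entry `(n − n/log n)⁻¹ λ_i⁻¹`, `⌊n/log n⌋ ≤ i ≤ n−1`, of the diagonal matrix
`J_n^τ` is at most `4 log² n / n`; in particular this holds for the largest
entry, attained at `i = ⌊n/log n⌋`.  Here `λ_i = 4 sin²(iπ/(2n))` and `log`
is the binary logarithm. -/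
theorem lambda_max_Jtau_bound :
    ∀ n : ℕ, 4 ≤ n →
      (((n : ℝ) - n / Real.logb 2 n)⁻¹
          * (4 * Real.sin ((⌊(n : ℝ) / Real.logb 2 n⌋₊ : ℝ) * Real.pi / (2 * n)) ^ 2)⁻¹
        ≤ 4 * (Real.logb 2 n) ^ 2 / n)
      ∧ ∀ i : ℕ, ⌊(n : ℝ) / Real.logb 2 n⌋₊ ≤ i → i ≤ n - 1 →
          ((n : ℝ) - n / Real.logb 2 n)⁻¹
              * (4 * Real.sin ((i : ℝ) * Real.pi / (2 * n)) ^ 2)⁻¹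
            ≤ 4 * (Real.logb 2 n) ^ 2 / n := by
  intro n hn
  have hm : ⌊(n : ℝ) / Real.logb 2 n⌋₊ ≤ n - 1 := by
    have hL2 : (2 : ℝ) ≤ Real.logb 2 n := by
      have : Real.logb 2 4 ≤ Real.logb 2 n := by
        apply Real.logb_le_logb_of_le (by norm_num : (1:ℝ) < 2) (by norm_num)
        exact_mod_cast hn
      have h4 : Real.logb 2 4 = 2 := by
        rw [show (4 : ℝ) = 2 ^ (2 : ℕ) by norm_num, Real.logb_pow,
          Real.logb_self_eq_one (by norm_num : (1:ℝ) < 2)]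
        norm_num
      linarith
    have hn0 : (0 : ℝ) < n := by positivity
    apply Nat.floor_le_of_le
    have h1 : (n : ℝ) / Real.logb 2 n ≤ (n : ℝ) / 2 :=
      div_le_div_of_nonneg_left (le_of_lt hn0) (by norm_num) hL2
    have h2 : ((n - 1 : ℕ) : ℝ) = (n : ℝ) - 1 := by
      have : 1 ≤ n := by omega
      push_cast [this]; ring
    rw [h2]
    have : (4 : ℝ) ≤ n := by exact_mod_cast hn
    linarith
  exact ⟨key n hn _ le_rfl hm, fun i h1 h2 => key n hn i h1 h2⟩
end

section
/- There exists a constant C > 0 such that for all integers n ≥ 2, |√n · Σ_{i=⌊√n⌋+1}^{2⌊√n⌋} 4·sin²(iπ/(2n)) − 7π²/3| ≤ C·n^{−1/2}. -/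
/-!
With `s = ⌊√n⌋` all angles `x = iπ/(2n)` with `i ≤ 2s` are at most `π/√n`, and
`|sin² x - x²| ≤ x⁴/3`, so replacing `4 sin² x` by `4x²` changes each of the `s` terms by
`O(n⁻²)` and the normalized sum by `O(n⁻¹)`. The remaining sum of squares is explicit:
`√n · (π/n)² · Σ i² = π² (14s³ + 9s² + s) / (6 n^{3/2})`, and `√n - 1 < s ≤ √n` puts this within
`7π²/√n` of `7π²/3`.
-/

open Real Finset

theorem abs_sin_sq_sub_sq_le (x : ℝ) : |sin x ^ 2 - x ^ 2| ≤ x ^ 4 / 3 := by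
  have h_add : |x + sin x| ≤ 2 * |x| :=
    (abs_add_le _ _).trans (by linarith [abs_sin_le_abs (x := x)])
  calc |sin x ^ 2 - x ^ 2| = |x - sin x| * |x + sin x| := by
        rw [← abs_mul, abs_sub_comm]; ring_nf
    _ ≤ |x| ^ 3 / 6 * (2 * |x|) := by gcongr; exact abs_sub_sin_le x
    _ = x ^ 4 / 3 := by
        rw [show |x| ^ 3 / 6 * (2 * |x|) = |x| ^ 4 / 3 by ring, pow_abs,
          abs_of_nonneg (by positivity)]

theorem sum_range_sq (m : ℕ) :
    ∑ i ∈ range m, (i : ℝ) ^ 2 = (m - 1) * m * (2 * m - 1) / 6 := by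
  induction m with
  | zero => simp
  | succ m ih => rw [sum_range_succ, ih]; push_cast; ring

theorem sum_Icc_succ_two_mul_sq (s : ℕ) :
    ∑ i ∈ Icc (s + 1) (2 * s), (i : ℝ) ^ 2 = (14 * s ^ 3 + 9 * s ^ 2 + s) / 6 := by
  rw [← Ico_add_one_right_eq_Icc, sum_Ico_eq_sub _ (by omega), sum_range_sq, sum_range_sq]
  push_cast
  ring

section

variable {s : ℕ} {r : ℝ}

theorem abs_mul_sum_four_sq_sub_le (hr : 0 < r) (hsr : s ≤ r) (hrs : r ≤ s + 1) :
    |r * ∑ i ∈ Icc (s + 1) (2 * s), 4 * ((i : ℝ) * π / (2 * r ^ 2)) ^ 2 - 7 * π ^ 2 / 3|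
      ≤ 7 * π ^ 2 / r := by
  have h_eq : r * ∑ i ∈ Icc (s + 1) (2 * s), 4 * ((i : ℝ) * π / (2 * r ^ 2)) ^ 2
      - 7 * π ^ 2 / 3 = π ^ 2 / (6 * r ^ 3) * (14 * (s : ℝ) ^ 3 + 9 * s ^ 2 + s - 14 * r ^ 3) := by
    have h_sum : ∑ i ∈ Icc (s + 1) (2 * s), 4 * ((i : ℝ) * π / (2 * r ^ 2)) ^ 2
        = π ^ 2 / r ^ 4 * ∑ i ∈ Icc (s + 1) (2 * s), (i : ℝ) ^ 2 := by
      rw [mul_sum]; exact sum_congr rfl fun i _ ↦ by field_simp; ring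
    rw [h_sum, sum_Icc_succ_two_mul_sq]
    field_simp
    ring
  have hs : (0 : ℝ) ≤ s := s.cast_nonneg
  have h_poly : |14 * (s : ℝ) ^ 3 + 9 * s ^ 2 + s - 14 * r ^ 3| ≤ 42 * r ^ 2 := by
    have h_cube : r ^ 3 - (s : ℝ) ^ 3 ≤ 3 * r ^ 2 := by
      nlinarith [mul_nonneg (by linarith : (0 : ℝ) ≤ s + 1 - r)
        (by positivity : (0 : ℝ) ≤ r ^ 2 + r * s + (s : ℝ) ^ 2), mul_nonneg hs hr.le]
    have h_sq : (s : ℝ) ≤ s ^ 2 := by exact_mod_cast Nat.le_self_pow two_ne_zero s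
    rw [abs_le]
    constructor
    · nlinarith
    · nlinarith [pow_le_pow_left₀ hs hsr 2, pow_le_pow_left₀ hs hsr 3]
  rw [h_eq, abs_mul, abs_of_pos (by positivity)]
  calc π ^ 2 / (6 * r ^ 3) * |14 * (s : ℝ) ^ 3 + 9 * s ^ 2 + s - 14 * r ^ 3|
      ≤ π ^ 2 / (6 * r ^ 3) * (42 * r ^ 2) := by gcongr
    _ = 7 * π ^ 2 / r := by field_simp; ring

theorem abs_four_sin_sq_sub_four_sq_le (hr : 0 < r) (hsr : s ≤ r) {i : ℕ} (hi : i ≤ 2 * s) :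
    |4 * sin ((i : ℝ) * π / (2 * r ^ 2)) ^ 2 - 4 * ((i : ℝ) * π / (2 * r ^ 2)) ^ 2|
      ≤ 4 * π ^ 4 / (3 * r ^ 4) := by
  set x := (i : ℝ) * π / (2 * r ^ 2)
  have hx : x ≤ π / r := by
    have hi' : (i : ℝ) ≤ 2 * r :=
      calc (i : ℝ) ≤ 2 * s := by exact_mod_cast hi
        _ ≤ 2 * r := by linarith
    rw [div_le_div_iff₀ (by positivity) hr]
    nlinarith [mul_le_mul_of_nonneg_right hi' (by positivity : 0 ≤ π * r)]
  calc |4 * sin x ^ 2 - 4 * x ^ 2| = 4 * |sin x ^ 2 - x ^ 2| := by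
        rw [← mul_sub, abs_mul, abs_of_pos four_pos]
    _ ≤ 4 * (x ^ 4 / 3) := by gcongr; exact abs_sin_sq_sub_sq_le x
    _ ≤ 4 * ((π / r) ^ 4 / 3) := by gcongr
    _ = 4 * π ^ 4 / (3 * r ^ 4) := by ring

theorem abs_mul_sum_four_sin_sq_sub_four_sq_le (hr : 0 < r) (hsr : s ≤ r) :
    |r * ∑ i ∈ Icc (s + 1) (2 * s), 4 * sin ((i : ℝ) * π / (2 * r ^ 2)) ^ 2
      - r * ∑ i ∈ Icc (s + 1) (2 * s), 4 * ((i : ℝ) * π / (2 * r ^ 2)) ^ 2|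
      ≤ 4 * π ^ 4 / (3 * r ^ 2) := by
  rw [← mul_sub, ← sum_sub_distrib, abs_mul, abs_of_pos hr]
  calc r * |∑ i ∈ Icc (s + 1) (2 * s),
          (4 * sin ((i : ℝ) * π / (2 * r ^ 2)) ^ 2 - 4 * ((i : ℝ) * π / (2 * r ^ 2)) ^ 2)|
      ≤ r * (s * (4 * π ^ 4 / (3 * r ^ 4))) := by
        gcongr
        refine (abs_sum_le_sum_abs _ _).trans <| (sum_le_card_nsmul _ _ _
          fun i hi ↦ abs_four_sin_sq_sub_four_sq_le hr hsr (mem_Icc.mp hi).2).trans_eq ?_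
        rw [Nat.card_Icc, show 2 * s + 1 - (s + 1) = s by omega, nsmul_eq_mul]
    _ ≤ r * (r * (4 * π ^ 4 / (3 * r ^ 4))) := by gcongr
    _ = 4 * π ^ 4 / (3 * r ^ 2) := by field_simp

theorem abs_mul_sum_four_sin_sq_sub_le (hr : 1 ≤ r) (hsr : s ≤ r) (hrs : r ≤ s + 1) :
    |r * ∑ i ∈ Icc (s + 1) (2 * s), 4 * sin ((i : ℝ) * π / (2 * r ^ 2)) ^ 2 - 7 * π ^ 2 / 3|
      ≤ (7 * π ^ 2 + 4 * π ^ 4 / 3) / r := by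
  have hr₀ : 0 < r := one_pos.trans_le hr
  have h_taylor := abs_mul_sum_four_sin_sq_sub_four_sq_le hr₀ hsr
  have h_main := abs_mul_sum_four_sq_sub_le hr₀ hsr hrs
  have h_r : 4 * π ^ 4 / (3 * r ^ 2) ≤ 4 * π ^ 4 / 3 / r := by
    rw [div_div, sq]; gcongr; nlinarith
  calc _ ≤ 4 * π ^ 4 / (3 * r ^ 2) + 7 * π ^ 2 / r :=
        (abs_sub_le _ _ _).trans (add_le_add h_taylor h_main)
    _ ≤ (7 * π ^ 2 + 4 * π ^ 4 / 3) / r := by rw [add_div]; linarith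

end

/-- Asymptotics of the eigenvalue sum:
`|√n · Σ_{i=⌊√n⌋+1}^{2⌊√n⌋} 4 sin²(iπ/(2n)) − 7π²/3| ≤ C·n^{−1/2}`. -/
theorem eigenvalue_sum_asymptotics :
    ∃ C > (0:ℝ), ∀ n : ℕ, 2 ≤ n →
      |Real.sqrt n * ∑ i ∈ Finset.Icc (Nat.sqrt n + 1) (2 * Nat.sqrt n),
            4 * Real.sin ((i : ℝ) * Real.pi / (2 * n)) ^ 2
          - 7 * Real.pi ^ 2 / 3|
        ≤ C * (n : ℝ) ^ (-(1 : ℝ) / 2) := by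
  refine ⟨7 * π ^ 2 + 4 * π ^ 4 / 3, by positivity, fun n hn ↦ ?_⟩
  have h_one : 1 ≤ √(n : ℝ) := one_le_sqrt.mpr (by exact_mod_cast one_le_two.trans hn)
  have h_rpow : (n : ℝ) ^ (-(1 : ℝ) / 2) = (√(n : ℝ))⁻¹ := by
    rw [neg_div, rpow_neg n.cast_nonneg, ← sqrt_eq_rpow]
  have h := abs_mul_sum_four_sin_sq_sub_le h_one nat_sqrt_le_real_sqrt real_sqrt_le_nat_sqrt_succ
  rw [h_rpow, ← div_eq_mul_inv]
  rwa [sq_sqrt n.cast_nonneg] at h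
end
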